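/- arXiv:1904.11134 — 8 statements merged into one kernel-verified Lean document; each statement's English description precedes it below -/
import Mathlib

section
/- (Theorem 4.2, exponential form of the maximum entropy model.) Let C = {X_1,…,X_k} be a collection of itemsets and Φ = (f_1,…,f_k) ∈ [0,1]^k. Suppose P_{C,Φ} contains a distribution p̃ with p̃(t) > 0 for every transaction t ∈ T, and let p* be a maximum-entropy distribution for ⟨C,Φ⟩. Then p* has exponential form over C, i.e., there exist reals u_0 > 0 and u_{X_1},…,u_{X_k} > 0 such that p*(t) = u_0 ∏_{i=1}^k u_{X_i}^{S_{X_i}(t)} for every t ∈ T. -/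
/-!
Entropy is concave with infinite slope at `0`: if the maximizer `p*` vanished at some `t₀`, moving
it by `ε` towards the strictly positive feasible `p̃` would gain `-ε p̃(t₀) log ε` at `t₀` while
losing only `O(ε)` overall, so `p* > 0`. At an interior maximizer the first-order condition makes
`log p*` orthogonal to every direction preserving the total mass and the itemset frequencies, so
`log p*` lies in the span of `1` and the indicators `S_X`; exponentiating gives the exponential
form.
-/

open scoped BigOperators

/-- A transaction over `N` items: an element of `{0,1}^N`. -/
abbrev Transaction (N : ℕ) := Fin N → Bool

/-- A transaction `t` supports an itemset `X` iff `t i = 1` for all `i ∈ X`. -/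
def supports {N : ℕ} (X : Finset (Fin N)) (t : Transaction N) : Prop :=
  ∀ i ∈ X, t i = true

instance {N : ℕ} (X : Finset (Fin N)) (t : Transaction N) : Decidable (supports X t) :=
  inferInstanceAs (Decidable (∀ i ∈ X, t i = true))

/-- A distribution on `{0,1}^N`: values in `[0,1]` summing to one. -/
def IsDistr {N : ℕ} (p : Transaction N → ℝ) : Prop :=
  (∀ t, 0 ≤ p t ∧ p t ≤ 1) ∧ ∑ t, p t = 1

/-- `p(X = 1)`: the probability that a transaction supports `X`. -/
def probOne {N : ℕ} (p : Transaction N → ℝ) (X : Finset (Fin N)) : ℝ :=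
  ∑ t, if supports X t then p t else 0

/-- Binary entropy `H(p) = -∑ p(t) log₂ p(t)` (with `0·log₂ 0 = 0`, as `Real.logb 2 0 = 0`). -/
noncomputable def entropy {N : ℕ} (p : Transaction N → ℝ) : ℝ :=
  - ∑ t, p t * Real.logb 2 (p t)

open Finset Real Matrix Filter Topology

section

variable {α : Type*} [Fintype α]

lemma sum_negMulLog_convexComb_ge_of_eq_zero {p q : α → ℝ} (hp : ∀ t, 0 ≤ p t) (hq : ∀ t, 0 ≤ q t)
    {t₀ : α} (hpt₀ : p t₀ = 0) {ε : ℝ} (hε₀ : 0 ≤ ε) (hε₁ : ε ≤ 1) :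
    (1 - ε) * ∑ t, negMulLog (p t) + ε * ∑ t, negMulLog (q t) - ε * q t₀ * log ε ≤
      ∑ t, negMulLog ((1 - ε) * p t + ε * q t) := by
  classical
  have hterm : ∀ t, (1 - ε) * negMulLog (p t) + ε * negMulLog (q t)
      - (if t = t₀ then ε * q t₀ * log ε else 0) ≤ negMulLog ((1 - ε) * p t + ε * q t) := by
    intro t
    by_cases ht : t = t₀
    · subst ht
      simp only [hpt₀, if_pos, mul_zero, zero_add, negMulLog_zero, negMulLog_mul]
      simp only [negMulLog]
      linarith
    · simpa [ht] using concaveOn_negMulLog.2 (Set.mem_Ici.2 (hp t)) (Set.mem_Ici.2 (hq t))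
        (sub_nonneg.2 hε₁) hε₀ (sub_add_cancel 1 ε)
  calc _ = ∑ t, ((1 - ε) * negMulLog (p t) + ε * negMulLog (q t)
          - (if t = t₀ then ε * q t₀ * log ε else 0)) := by
        simp only [sum_sub_distrib, sum_add_distrib, mul_sum, sum_ite_eq', mem_univ, if_true]
    _ ≤ _ := sum_le_sum fun t _ => hterm t

theorem pos_of_isMaxOn_sum_negMulLog {K : Set (α → ℝ)} (hK : Convex ℝ K) {p q : α → ℝ}
    (hmax : IsMaxOn (fun r => ∑ t, negMulLog (r t)) K p) (hpK : p ∈ K) (hp : ∀ t, 0 ≤ p t)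
    (hqK : q ∈ K) (hq : ∀ t, 0 < q t) (t₀ : α) : 0 < p t₀ := by
  refine (hp t₀).lt_of_ne' fun hpt₀ => ?_
  set F : (α → ℝ) → ℝ := fun r => ∑ t, negMulLog (r t)
  set ε := min 1 (exp ((F q - F p) / q t₀ - 1))
  have hε₀ : 0 < ε := lt_min one_pos (exp_pos _)
  have hlog : q t₀ * log ε < F q - F p := by
    have : log ε ≤ (F q - F p) / q t₀ - 1 :=
      (log_le_log hε₀ (min_le_right _ _)).trans (log_exp _).le
    rw [← lt_div_iff₀' (hq t₀)]
    linarith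
  have hmix : ∑ t, negMulLog ((1 - ε) * p t + ε * q t) ≤ F p :=
    isMaxOn_iff.1 hmax _ (hK hpK hqK (sub_nonneg.2 (min_le_left _ _)) hε₀.le (sub_add_cancel 1 ε))
  have hlower :=
    sum_negMulLog_convexComb_ge_of_eq_zero hp (fun t => (hq t).le) hpt₀ hε₀.le (min_le_left _ _)
  linarith [mul_pos hε₀ (sub_pos.2 hlog)]

theorem sum_mul_log_add_one_eq_zero_of_isMaxOn {K : Set (α → ℝ)} {p v : α → ℝ}
    (hmax : IsMaxOn (fun r => ∑ t, negMulLog (r t)) K p) (hp : ∀ t, 0 < p t)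
    (hv : ∀ᶠ ε in 𝓝 (0 : ℝ), p + ε • v ∈ K) :
    ∑ t, v t * (log (p t) + 1) = 0 := by
  have hloc : IsLocalMax (fun ε : ℝ => ∑ t, negMulLog (p t + ε * v t)) 0 :=
    hv.mono fun ε hε => by simpa using isMaxOn_iff.1 hmax _ hε
  have hderiv : HasDerivAt (fun ε : ℝ => ∑ t, negMulLog (p t + ε * v t))
      (∑ t, (-log (p t) - 1) * v t) 0 := by
    refine HasDerivAt.fun_sum fun t _ => ?_
    have hline : HasDerivAt (fun ε : ℝ => p t + ε * v t) (v t) 0 := by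
      simpa using ((hasDerivAt_id (0 : ℝ)).mul_const (v t)).const_add (p t)
    exact (by simpa using hasDerivAt_negMulLog (hp t).ne' :
      HasDerivAt negMulLog (-log (p t) - 1) (p t + 0 * v t)).comp 0 hline
  calc ∑ t, v t * (log (p t) + 1) = -∑ t, (-log (p t) - 1) * v t := by
        rw [← sum_neg_distrib]; congr 1 with t; ring
    _ = 0 := by rw [hloc.hasDerivAt_eq_zero hderiv, neg_zero]

theorem mem_span_of_forall_dotProduct_eq_zero {S : Set (α → ℝ)} {L : α → ℝ}
    (h : ∀ v, (∀ g ∈ S, v ⬝ᵥ g = 0) → v ⬝ᵥ L = 0) : L ∈ Submodule.span ℝ S := by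
  classical
  by_contra hL
  obtain ⟨φ, hφL, hφS⟩ := Submodule.exists_dual_map_eq_bot_of_notMem hL inferInstance
  set v : α → ℝ := fun t => φ fun s => if t = s then 1 else 0
  have hφ : ∀ x, φ x = v ⬝ᵥ x := fun x => by
    rw [LinearMap.pi_apply_eq_sum_univ φ x, dotProduct_comm]; rfl
  refine hφL ((hφ L).trans (h v fun g hg => ?_))
  rw [← hφ, ← Submodule.mem_bot ℝ, ← hφS]
  exact Submodule.mem_map_of_mem (Submodule.subset_span hg)

end

theorem exists_eq_mul_prod_of_log_mem_span {α ι : Type*} [Fintype ι] {p : α → ℝ}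
    (hp : ∀ t, 0 < p t) (P : ι → α → Prop) [∀ i t, Decidable (P i t)]
    (hlog : (fun t => log (p t)) ∈
      Submodule.span ℝ (insert 1 (Set.range fun i t => if P i t then (1 : ℝ) else 0))) :
    ∃ u₀ : ℝ, ∃ u : ι → ℝ, 0 < u₀ ∧ (∀ i, 0 < u i) ∧
      ∀ t, p t = u₀ * ∏ i, if P i t then u i else 1 := by
  obtain ⟨a, z, hz, hlog⟩ := Submodule.mem_span_insert.1 hlog
  obtain ⟨c, rfl⟩ := Submodule.mem_span_range_iff_exists_fun ℝ |>.1 hz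
  refine ⟨exp a, fun i => exp (c i), exp_pos _, fun i => exp_pos _, fun t => ?_⟩
  have hlogt := congrFun hlog t
  simp only [Pi.add_apply, Pi.smul_apply, Pi.one_apply, smul_eq_mul, mul_one,
    Finset.sum_apply] at hlogt
  rw [← exp_log (hp t), hlogt, exp_add, exp_sum]
  refine congrArg _ (prod_congr rfl fun i _ => ?_)
  split_ifs <;> simp

section Transactions

variable {N k : ℕ}

def constrainedDistrs (X : Fin k → Finset (Fin N)) (f : Fin k → ℝ) : Set (Transaction N → ℝ) :=
  {q | IsDistr q ∧ ∀ i, probOne q (X i) = f i}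

lemma isDistr_iff {p : Transaction N → ℝ} : IsDistr p ↔ (∀ t, 0 ≤ p t) ∧ ∑ t, p t = 1 := by
  refine ⟨fun h => ⟨fun t => (h.1 t).1, h.2⟩, fun ⟨hp, hsum⟩ => ⟨fun t => ⟨hp t, ?_⟩, hsum⟩⟩
  exact hsum ▸ single_le_sum (fun s _ => hp s) (mem_univ t)

lemma probOne_add (p q : Transaction N → ℝ) (X : Finset (Fin N)) :
    probOne (p + q) X = probOne p X + probOne q X := by
  simp only [probOne, ← sum_add_distrib]
  refine sum_congr rfl fun t _ => ?_
  split_ifs <;> simp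

lemma probOne_smul (c : ℝ) (p : Transaction N → ℝ) (X : Finset (Fin N)) :
    probOne (c • p) X = c * probOne p X := by
  simp only [probOne, mul_sum]
  refine sum_congr rfl fun t _ => ?_
  split_ifs <;> simp

lemma probOne_eq_dotProduct (p : Transaction N → ℝ) (X : Finset (Fin N)) :
    probOne p X = p ⬝ᵥ fun t => if supports X t then 1 else 0 := by
  simp only [probOne, dotProduct, mul_ite, mul_one, mul_zero]

lemma convex_constrainedDistrs (X : Fin k → Finset (Fin N)) (f : Fin k → ℝ) :
    Convex ℝ (constrainedDistrs X f) := by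
  rintro p ⟨hp, hpX⟩ q ⟨hq, hqX⟩ a b ha hb hab
  rw [isDistr_iff] at hp hq
  refine ⟨isDistr_iff.2 ⟨fun t => ?_, ?_⟩, fun i => ?_⟩
  · simp only [Pi.add_apply, Pi.smul_apply, smul_eq_mul]
    exact add_nonneg (mul_nonneg ha (hp.1 t)) (mul_nonneg hb (hq.1 t))
  · simp only [Pi.add_apply, Pi.smul_apply, smul_eq_mul, sum_add_distrib, ← mul_sum, hp.2, hq.2,
      mul_one, hab]
  · rw [probOne_add, probOne_smul, probOne_smul, hpX, hqX, ← add_mul, hab, one_mul]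

lemma eventually_add_smul_mem_constrainedDistrs {X : Fin k → Finset (Fin N)} {f : Fin k → ℝ}
    {p v : Transaction N → ℝ} (hp : p ∈ constrainedDistrs X f) (hpos : ∀ t, 0 < p t)
    (hv : ∑ t, v t = 0) (hvX : ∀ i, probOne v (X i) = 0) :
    ∀ᶠ ε in 𝓝 (0 : ℝ), p + ε • v ∈ constrainedDistrs X f := by
  have hnear : ∀ᶠ ε in 𝓝 (0 : ℝ), ∀ t, 0 < p t + ε * v t := eventually_all.2 fun t =>
    ((continuous_const.add (continuous_id.mul continuous_const)).tendsto 0).eventually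
      (lt_mem_nhds (by simpa using hpos t))
  refine hnear.mono fun ε hε => ⟨isDistr_iff.2 ⟨fun t => (hε t).le, ?_⟩, fun i => ?_⟩
  · simp only [Pi.add_apply, Pi.smul_apply, smul_eq_mul, sum_add_distrib, ← mul_sum, hv,
      (isDistr_iff.1 hp.1).2, mul_zero, add_zero]
  · rw [probOne_add, probOne_smul, hvX, mul_zero, add_zero, hp.2 i]

lemma entropy_eq_sum_negMulLog_div (p : Transaction N → ℝ) :
    entropy p = (∑ t, negMulLog (p t)) / log 2 := by
  simp only [entropy, negMulLog, logb, sum_div, ← sum_neg_distrib]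
  exact sum_congr rfl fun t _ => by ring

end Transactions

theorem maxent_exponential_form_general {N k : ℕ}
    (X : Fin k → Finset (Fin N)) (f : Fin k → ℝ)
    -- `P_{C,Φ}` contains a distribution with only nonzero entries:
    (ptilde : Transaction N → ℝ) (hptilde : IsDistr ptilde)
    (hptildeC : ∀ i, probOne ptilde (X i) = f i)
    (hptildePos : ∀ t, 0 < ptilde t)
    -- `p*` is a maximum-entropy distribution for `⟨C, Φ⟩`:
    (pstar : Transaction N → ℝ) (hpstar : IsDistr pstar)
    (hpstarC : ∀ i, probOne pstar (X i) = f i)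
    (hpstarMax : ∀ q : Transaction N → ℝ, IsDistr q → (∀ i, probOne q (X i) = f i) →
      entropy q ≤ entropy pstar) :
    ∃ u0 : ℝ, ∃ u : Fin k → ℝ, 0 < u0 ∧ (∀ i, 0 < u i) ∧
      ∀ t, pstar t = u0 * ∏ i, if supports (X i) t then u i else 1 := by
  have hpK : pstar ∈ constrainedDistrs X f := ⟨hpstar, hpstarC⟩
  have hmax : IsMaxOn (fun r => ∑ t, negMulLog (r t)) (constrainedDistrs X f) pstar :=
    isMaxOn_iff.2 fun q hq => by
      have h := hpstarMax q hq.1 hq.2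
      rwa [entropy_eq_sum_negMulLog_div, entropy_eq_sum_negMulLog_div,
        div_le_div_iff_of_pos_right (log_pos one_lt_two)] at h
  have hpos := pos_of_isMaxOn_sum_negMulLog (convex_constrainedDistrs X f) hmax hpK
    (fun t => (hpstar.1 t).1) ⟨hptilde, hptildeC⟩ hptildePos
  refine exists_eq_mul_prod_of_log_mem_span hpos (fun i => supports (X i))
    (mem_span_of_forall_dotProduct_eq_zero fun v hv => ?_)
  have hv1 : ∑ t, v t = 0 := by simpa only [dotProduct_one] using hv 1 (Set.mem_insert _ _)
  have hvX : ∀ i, probOne v (X i) = 0 := fun i => by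
    rw [probOne_eq_dotProduct]
    exact hv _ (Set.mem_insert_of_mem _ ⟨i, rfl⟩)
  have hstat := sum_mul_log_add_one_eq_zero_of_isMaxOn hmax hpos
    (eventually_add_smul_mem_constrainedDistrs hpK hpos hv1 hvX)
  simpa only [dotProduct, mul_add, mul_one, sum_add_distrib, hv1, add_zero] using hstat

/-- Theorem 4.2: the maximum entropy model has exponential form. -/
theorem maxent_exponential_form {N k : ℕ} (hN : 1 ≤ N)
    (X : Fin k → Finset (Fin N)) (f : Fin k → ℝ)
    (hf : ∀ i, f i ∈ Set.Icc (0 : ℝ) 1)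
    -- `P_{C,Φ}` contains a distribution with only nonzero entries:
    (ptilde : Transaction N → ℝ) (hptilde : IsDistr ptilde)
    (hptildeC : ∀ i, probOne ptilde (X i) = f i)
    (hptildePos : ∀ t, 0 < ptilde t)
    -- `p*` is a maximum-entropy distribution for `⟨C, Φ⟩`:
    (pstar : Transaction N → ℝ) (hpstar : IsDistr pstar)
    (hpstarC : ∀ i, probOne pstar (X i) = f i)
    (hpstarMax : ∀ q : Transaction N → ℝ, IsDistr q → (∀ i, probOne q (X i) = f i) →
      entropy q ≤ entropy pstar) :
    ∃ u0 : ℝ, ∃ u : Fin k → ℝ, 0 < u0 ∧ (∀ i, 0 < u i) ∧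
      ∀ t, pstar t = u0 * ∏ i, if supports (X i) t then u i else 1 :=
  maxent_exponential_form_general X f ptilde hptilde hptildeC hptildePos pstar hpstar hpstarC
    hpstarMax
end

section
/- (Corollary 4.3, entropy form of the log-likelihood.) Let p be a distribution on T having exponential form over C = {X_1,…,X_k}, and let D be a dataset such that p(X_i = 1) = fr(X_i|D) for i = 1,…,k. Then log₂ p(D) = −|D|·H(p). -/
/-!
For `p` of exponential form, `log₂ p(t) = log₂ u₀ + ∑ᵢ S_{Xᵢ}(t) log₂ uᵢ` is affine in the
indicators `S_{Xᵢ}`. Hence `log₂ p(D) = ∑_{t ∈ D} log₂ p(t)` depends on `D` only through the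
frequencies `fr(Xᵢ|D)`, and `-H(p) = ∑ₜ p(t) log₂ p(t)` depends on `p` only through the marginals
`p(Xᵢ = 1)`; the two expressions agree, up to the factor `|D|`, once these coincide.
-/

open scoped BigOperators

/-- Frequency of an itemset in a dataset (a multiset of transactions). -/
noncomputable def freq {N : ℕ} (X : Finset (Fin N)) (D : Multiset (Transaction N)) : ℝ :=
  (D.countP (fun t => supports X t) : ℝ) / (Multiset.card D : ℝ)

/-- Likelihood of a dataset: `p(D) = ∏_{t ∈ D} p(t)`. -/
noncomputable def lhd {N : ℕ} (p : Transaction N → ℝ) (D : Multiset (Transaction N)) : ℝ :=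
  (D.map p).prod

/-- `p` has exponential form over the indexed collection `X_1, …, X_k`. -/
def ExpFormIdx {N k : ℕ} (X : Fin k → Finset (Fin N)) (p : Transaction N → ℝ) : Prop :=
  ∃ u0 : ℝ, ∃ u : Fin k → ℝ, 0 < u0 ∧ (∀ i, 0 < u i) ∧
    ∀ t, p t = u0 * ∏ i, if supports (X i) t then u i else 1

theorem Multiset.sum_map_ite_const_zero {α M : Type*} [AddCommMonoid M] (s : Multiset α)
    (p : α → Prop) [DecidablePred p] (a : M) :
    (s.map fun x => if p x then a else 0).sum = s.countP p • a := by
  induction s using Multiset.induction_on with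
  | empty => simp
  | cons x s ih => by_cases h : p x <;> simp [h, ih, add_nsmul, add_comm]

theorem Real.logb_multiset_prod_map {α : Type*} (b : ℝ) (s : Multiset α) (f : α → ℝ)
    (hf : ∀ x ∈ s, f x ≠ 0) :
    Real.logb b (s.map f).prod = (s.map fun x => Real.logb b (f x)).sum := by
  simp only [Real.logb]
  rw [Real.log_multiset_prod (by simpa using hf), Multiset.map_map, Multiset.sum_map_div]
  rfl

section SupportAffine

variable {N k : ℕ} (X : Fin k → Finset (Fin N)) (c : ℝ) (a : Fin k → ℝ)

def supportAffine (t : Transaction N) : ℝ :=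
  c + ∑ i, if supports (X i) t then a i else 0

theorem sum_map_supportAffine {D : Multiset (Transaction N)} (hD : D ≠ 0) :
    (D.map (supportAffine X c a)).sum = Multiset.card D * (c + ∑ i, a i * freq (X i) D) := by
  have hcard : (Multiset.card D : ℝ) ≠ 0 := by
    exact_mod_cast (Multiset.card_pos.mpr hD).ne'
  unfold supportAffine
  simp only [Multiset.sum_map_add, Multiset.map_const', Multiset.sum_replicate,
    Multiset.sum_map_sum, Multiset.sum_map_ite_const_zero, nsmul_eq_mul, freq]
  rw [mul_add, Finset.mul_sum]
  congr 1
  refine Finset.sum_congr rfl fun i _ => ?_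
  field_simp

theorem sum_mul_supportAffine {p : Transaction N → ℝ} (hp : ∑ t, p t = 1) :
    ∑ t, p t * supportAffine X c a t = c + ∑ i, a i * probOne p (X i) := by
  simp only [supportAffine, probOne, mul_add, Finset.sum_add_distrib, ← Finset.sum_mul, hp,
    one_mul, Finset.mul_sum]
  rw [Finset.sum_comm]
  congr 1
  refine Finset.sum_congr rfl fun i _ => Finset.sum_congr rfl fun t _ => ?_
  split_ifs <;> ring

end SupportAffine

section ExpFormIdx

variable {N k : ℕ} {X : Fin k → Finset (Fin N)} {p : Transaction N → ℝ}

theorem ExpFormIdx.pos (h : ExpFormIdx X p) (t : Transaction N) : 0 < p t := by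
  obtain ⟨u0, u, hu0, hu, hpu⟩ := h
  rw [hpu t]
  exact mul_pos hu0 (Finset.prod_pos fun i _ => by split_ifs; exacts [hu i, one_pos])

theorem ExpFormIdx.exists_logb_eq_supportAffine (h : ExpFormIdx X p) (b : ℝ) :
    ∃ c a, ∀ t, Real.logb b (p t) = supportAffine X c a t := by
  obtain ⟨u0, u, hu0, hu, hpu⟩ := h
  refine ⟨Real.logb b u0, fun i => Real.logb b (u i), fun t => ?_⟩
  have hfactor : ∀ i ∈ Finset.univ, (if supports (X i) t then u i else 1) ≠ 0 := fun i _ => by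
    split_ifs
    exacts [(hu i).ne', one_ne_zero]
  rw [hpu t, Real.logb_mul hu0.ne' (Finset.prod_ne_zero_iff.mpr hfactor),
    Real.logb_prod _ _ hfactor]
  simp only [supportAffine, apply_ite (Real.logb b), Real.logb_one]

end ExpFormIdx

theorem loglik_entropy_form_general {N k : ℕ}
    (X : Fin k → Finset (Fin N))
    (p : Transaction N → ℝ) (hp : IsDistr p) (hform : ExpFormIdx X p)
    (D : Multiset (Transaction N)) (hD : D ≠ 0)
    (hcons : ∀ i, probOne p (X i) = freq (X i) D) :
    Real.logb 2 (lhd p D) = -(Multiset.card D : ℝ) * entropy p := by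
  obtain ⟨c, a, hlog⟩ := hform.exists_logb_eq_supportAffine 2
  calc Real.logb 2 (lhd p D)
      = (D.map (supportAffine X c a)).sum := by
        rw [lhd, Real.logb_multiset_prod_map _ _ _ fun t _ => (hform.pos t).ne']
        simp only [hlog]
    _ = Multiset.card D * (c + ∑ i, a i * probOne p (X i)) := by
        simp only [sum_map_supportAffine X c a hD, hcons]
    _ = -(Multiset.card D : ℝ) * entropy p := by
        rw [← sum_mul_supportAffine X c a hp.2, entropy]
        simp only [hlog, neg_mul_neg]

/-- Corollary 4.3 (entropy form of the log-likelihood). -/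
theorem loglik_entropy_form {N k : ℕ} (hN : 1 ≤ N)
    (X : Fin k → Finset (Fin N))
    (p : Transaction N → ℝ) (hp : IsDistr p) (hform : ExpFormIdx X p)
    (D : Multiset (Transaction N)) (hD : D ≠ 0)
    (hcons : ∀ i, probOne p (X i) = freq (X i) D) :
    Real.logb 2 (lhd p D) = -(Multiset.card D : ℝ) * entropy p :=
  loglik_entropy_form_general X p hp hform D hD hcons
end

section
/- (Theorem 4.7, itemsets whose frequency equals the model estimate are redundant.) Fix a collection of itemsets C, a dataset D, and let p*_C be a maximum-entropy distribution consistent with D for C (i.e., p*_C(Y = 1) = fr(Y|D) for all Y ∈ C). Let X ∉ C be an itemset with fr(X|D) = p*_C(X = 1), and let p*_{C∪{X}} be a maximum-entropy distribution consistent with D for C ∪ {X}. Then p*_{C∪{X}} = p*_C (in particular H(p*_{C∪{X}}) = H(p*_C)), and consequently, if |D| ≥ 2, BIC(C∪{X}, D) > BIC(C, D). -/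
open scoped BigOperators

/-- BIC score of a collection `C` w.r.t. dataset `D`, where `p` is the
maximum-entropy distribution for `C` consistent with `D`. -/
noncomputable def bic {N : ℕ} (p : Transaction N → ℝ) (C : Finset (Finset (Fin N)))
    (D : Multiset (Transaction N)) : ℝ :=
  - Real.logb 2 (lhd p D) + ((C.card : ℝ) / 2) * Real.logb 2 (Multiset.card D : ℝ)

/-- Midpoint concavity of `negMulLog`. -/
lemma nml_mid {a b : ℝ} (ha : 0 ≤ a) (hb : 0 ≤ b) :
    (Real.negMulLog a + Real.negMulLog b) / 2 ≤ Real.negMulLog ((a + b) / 2) := by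
  have h := Real.concaveOn_negMulLog.2 (Set.mem_Ici.mpr ha) (Set.mem_Ici.mpr hb)
    (by norm_num : (0:ℝ) ≤ 1/2) (by norm_num : (0:ℝ) ≤ 1/2) (by norm_num)
  simp only [smul_eq_mul] at h
  have e : (1/2:ℝ) * a + (1/2) * b = (a + b) / 2 := by ring
  rw [e] at h; linarith

/-- Strict midpoint concavity of `negMulLog`. -/
lemma nml_mid_strict {a b : ℝ} (ha : 0 ≤ a) (hb : 0 ≤ b) (hne : a ≠ b) :
    (Real.negMulLog a + Real.negMulLog b) / 2 < Real.negMulLog ((a + b) / 2) := by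
  have h := Real.strictConcaveOn_negMulLog.2 (Set.mem_Ici.mpr ha) (Set.mem_Ici.mpr hb)
    hne (by norm_num : (0:ℝ) < 1/2) (by norm_num : (0:ℝ) < 1/2) (by norm_num)
  simp only [smul_eq_mul] at h
  have e : (1/2:ℝ) * a + (1/2) * b = (a + b) / 2 := by ring
  rw [e] at h; linarith

/-- Entropy in terms of `negMulLog`. -/
lemma entropy_eq_nml {N : ℕ} (p : Transaction N → ℝ) :
    entropy p = (∑ t, Real.negMulLog (p t)) / Real.log 2 := by
  unfold entropy
  rw [Finset.sum_div]
  rw [← Finset.sum_neg_distrib]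
  refine Finset.sum_congr rfl fun t _ => ?_
  rw [Real.negMulLog, Real.logb]
  ring

/-- Theorem 4.7: an itemset whose frequency equals the model estimate is
redundant: adding it leaves the maximum entropy model unchanged and strictly
increases the BIC score. -/
theorem redundant_itemset_bic {N : ℕ} (hN : 1 ≤ N)
    (C : Finset (Finset (Fin N)))
    (D : Multiset (Transaction N)) (hD : D ≠ 0)
    -- `p*_C` is a maximum-entropy distribution consistent with `D` for `C`:
    (pstar : Transaction N → ℝ) (hpstar : IsDistr pstar)
    (hcons : ∀ Y ∈ C, probOne pstar Y = freq Y D)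
    (hmax : ∀ q : Transaction N → ℝ, IsDistr q → (∀ Y ∈ C, probOne q Y = freq Y D) →
      entropy q ≤ entropy pstar)
    -- `X ∉ C` whose observed frequency agrees with the model estimate:
    (X : Finset (Fin N)) (hX : X ∉ C) (hXfr : freq X D = probOne pstar X)
    -- `p*_{C ∪ {X}}` is a maximum-entropy distribution consistent with `D` for `C ∪ {X}`:
    (pstar' : Transaction N → ℝ) (hpstar' : IsDistr pstar')
    (hcons' : ∀ Y ∈ insert X C, probOne pstar' Y = freq Y D)
    (hmax' : ∀ q : Transaction N → ℝ, IsDistr q →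
      (∀ Y ∈ insert X C, probOne q Y = freq Y D) → entropy q ≤ entropy pstar') :
    pstar' = pstar ∧ entropy pstar' = entropy pstar ∧
      (2 ≤ Multiset.card D → bic pstar C D < bic pstar' (insert X C) D) := by
  classical
  have hconsX : ∀ Y ∈ insert X C, probOne pstar Y = freq Y D := by
    intro Y hY
    rcases Finset.mem_insert.mp hY with rfl | hY
    · exact hXfr.symm
    · exact hcons Y hY
  have h1 : entropy pstar ≤ entropy pstar' := hmax' pstar hpstar hconsX
  have h2 : entropy pstar' ≤ entropy pstar :=
    hmax pstar' hpstar' (fun Y hY => hcons' Y (Finset.mem_insert_of_mem hY))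
  have hent : entropy pstar' = entropy pstar := le_antisymm h2 h1
  have heq : pstar' = pstar := by
    by_contra hne
    obtain ⟨t0, ht0⟩ : ∃ t, pstar t ≠ pstar' t := by
      by_contra h; push_neg at h; exact hne (funext fun t => (h t).symm)
    set q : Transaction N → ℝ := fun t => (pstar t + pstar' t) / 2 with hq
    have hqd : IsDistr q := by
      constructor
      · intro t
        obtain ⟨ha0, ha1⟩ := hpstar.1 t
        obtain ⟨hb0, hb1⟩ := hpstar'.1 t
        constructor <;> simp only [hq] <;> linarith
      · show ∑ t, (pstar t + pstar' t) / 2 = 1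
        rw [← Finset.sum_div, Finset.sum_add_distrib, hpstar.2, hpstar'.2]
        norm_num
    have hlin : ∀ Y, probOne q Y = (probOne pstar Y + probOne pstar' Y) / 2 := by
      intro Y
      unfold probOne
      rw [eq_div_iff (by norm_num : (2:ℝ) ≠ 0), Finset.sum_mul]
      rw [← Finset.sum_add_distrib]
      refine Finset.sum_congr rfl fun t _ => ?_
      show (if supports Y t then q t else 0) * 2 = _
      simp only [hq]
      split <;> ring
    have hqcons : ∀ Y ∈ insert X C, probOne q Y = freq Y D := by
      intro Y hY
      rw [hlin Y, hconsX Y hY, hcons' Y hY]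
      ring
    have hub : entropy q ≤ entropy pstar' := hmax' q hqd hqcons
    have hsum : (∑ t, Real.negMulLog (pstar t) + ∑ t, Real.negMulLog (pstar' t)) / 2
        < ∑ t, Real.negMulLog (q t) := by
      rw [← Finset.sum_add_distrib, Finset.sum_div]
      refine Finset.sum_lt_sum (fun t _ => nml_mid (hpstar.1 t).1 (hpstar'.1 t).1)
        ⟨t0, Finset.mem_univ t0, nml_mid_strict (hpstar.1 t0).1 (hpstar'.1 t0).1 ht0⟩
    have hlog2 : (0:ℝ) < Real.log 2 := Real.log_pos (by norm_num)
    have hstrict : entropy pstar' < entropy q := by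
      have hE : entropy pstar = entropy pstar' := hent.symm
      rw [entropy_eq_nml, entropy_eq_nml] at hE
      have hSS := congrArg (· * Real.log 2) hE
      simp only [div_mul_cancel₀ _ (ne_of_gt hlog2)] at hSS
      have hlt : (∑ t, Real.negMulLog (pstar' t)) < ∑ t, Real.negMulLog (q t) := by
        linarith
      rw [entropy_eq_nml, entropy_eq_nml]
      gcongr
    exact absurd hub (not_le.mpr hstrict)
  subst heq
  refine ⟨rfl, rfl, fun hcard => ?_⟩
  unfold bic
  have hLpos : (0:ℝ) < Real.logb 2 (Multiset.card D : ℝ) :=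
    Real.logb_pos (by norm_num) (by exact_mod_cast lt_of_lt_of_le one_lt_two hcard)
  have hc : (C.card : ℝ) / 2 < (((insert X C).card : ℝ)) / 2 := by
    rw [Finset.card_insert_of_notMem hX]
    push_cast
    linarith
  have := mul_lt_mul_of_pos_right hc hLpos
  linarith
end

section
/- (Corollary 4.8, itemsets between a generator and its closure are redundant.) Fix a collection of itemsets C and a dataset D, and suppose X, Y ∈ C with X ⊂ Y and fr(X|D) = fr(Y|D) ≠ 0. Let Z ∉ C be an itemset with X ⊂ Z ⊂ Y, let p*_C be a maximum-entropy distribution consistent with D for C, and let p*_{C∪{Z}} be a maximum-entropy distribution consistent with D for C ∪ {Z}. Then p*_C(Z = 1) = fr(Z|D), hence p*_{C∪{Z}} = p*_C, and consequently, if |D| ≥ 2, BIC(C∪{Z}, D) > BIC(C, D). -/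
open scoped BigOperators

/-- Strict midpoint inequality for `x ↦ x * log x`. -/
private lemma mul_log_midpoint_lt {a b : ℝ} (ha : 0 ≤ a) (hb : 0 ≤ b) (hab : a ≠ b) :
    ((a + b) / 2) * Real.log ((a + b) / 2)
      < (a * Real.log a + b * Real.log b) / 2 := by
  have h := Real.strictConvexOn_mul_log.2 (Set.mem_Ici.mpr ha) (Set.mem_Ici.mpr hb) hab
    (by norm_num : (0:ℝ) < 1/2) (by norm_num : (0:ℝ) < 1/2) (by norm_num)
  simp only [smul_eq_mul] at h
  have h1 : (1/2 : ℝ) * a + (1/2 : ℝ) * b = (a + b) / 2 := by ring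
  rw [h1] at h
  linarith

private lemma probOne_anti {N : ℕ} (p : Transaction N → ℝ) (hp : ∀ t, 0 ≤ p t)
    {A B : Finset (Fin N)} (h : A ⊆ B) : probOne p B ≤ probOne p A := by
  apply Finset.sum_le_sum
  intro t _
  by_cases hB : supports B t
  · have hA : supports A t := fun i hi => hB i (h hi)
    simp [hA, hB]
  · simp only [hB, if_false]
    split_ifs
    · exact hp t
    · exact le_refl 0

private lemma freq_anti {N : ℕ} (D : Multiset (Transaction N))
    {A B : Finset (Fin N)} (h : A ⊆ B) : freq B D ≤ freq A D := by
  unfold freq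
  have hle : (fun t : Transaction N => supports B t) ≤ fun t => supports A t := by
    intro t hB
    exact fun i hi => hB i (h hi)
  have hcnt := Multiset.card_le_card (Multiset.monotone_filter_right D hle)
  have key : (D.countP (fun t => supports B t) : ℝ)
      ≤ (D.countP (fun t => supports A t) : ℝ) := by
    rw [Multiset.countP_eq_card_filter, Multiset.countP_eq_card_filter]
    exact_mod_cast hcnt
  have hc : (0:ℝ) ≤ (Multiset.card D : ℝ) := by positivity
  gcongr

/-- `probOne` of an average is the average of `probOne`s. -/
private lemma probOne_avg {N : ℕ} (p q : Transaction N → ℝ) (W : Finset (Fin N)) :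
    probOne (fun t => (p t + q t) / 2) W = (probOne p W + probOne q W) / 2 := by
  unfold probOne
  rw [← Finset.sum_add_distrib, Finset.sum_div]
  apply Finset.sum_congr rfl
  intro t _
  split_ifs <;> simp

/-- Corollary 4.8: an itemset strictly between a generator and its closure is
redundant. -/
theorem between_generator_and_closure_redundant {N : ℕ} (hN : 1 ≤ N)
    (C : Finset (Finset (Fin N)))
    (D : Multiset (Transaction N)) (hD : D ≠ 0)
    (X Y : Finset (Fin N)) (hXC : X ∈ C) (hYC : Y ∈ C) (hXY : X ⊂ Y)
    (hfrXY : freq X D = freq Y D) (hfr0 : freq X D ≠ 0)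
    (Z : Finset (Fin N)) (hZC : Z ∉ C) (hXZ : X ⊂ Z) (hZY : Z ⊂ Y)
    -- `p*_C` is a maximum-entropy distribution consistent with `D` for `C`:
    (pstar : Transaction N → ℝ) (hpstar : IsDistr pstar)
    (hcons : ∀ W ∈ C, probOne pstar W = freq W D)
    (hmax : ∀ q : Transaction N → ℝ, IsDistr q → (∀ W ∈ C, probOne q W = freq W D) →
      entropy q ≤ entropy pstar)
    -- `p*_{C ∪ {Z}}` is a maximum-entropy distribution consistent with `D` for `C ∪ {Z}`:
    (pstar' : Transaction N → ℝ) (hpstar' : IsDistr pstar')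
    (hcons' : ∀ W ∈ insert Z C, probOne pstar' W = freq W D)
    (hmax' : ∀ q : Transaction N → ℝ, IsDistr q →
      (∀ W ∈ insert Z C, probOne q W = freq W D) → entropy q ≤ entropy pstar') :
    probOne pstar Z = freq Z D ∧ pstar' = pstar ∧
      (2 ≤ Multiset.card D → bic pstar C D < bic pstar' (insert Z C) D) := by
  have hXZ' := hXZ.subset
  have hZY' := hZY.subset
  have hp0 : ∀ t, 0 ≤ pstar t := fun t => (hpstar.1 t).1
  have hp0' : ∀ t, 0 ≤ pstar' t := fun t => (hpstar'.1 t).1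
  have hfrZX : freq Z D = freq X D := by
    have h1 : freq Z D ≤ freq X D := freq_anti D hXZ'
    have h2 : freq Y D ≤ freq Z D := freq_anti D hZY'
    linarith [hfrXY]
  have part1 : probOne pstar Z = freq Z D := by
    have h1 : probOne pstar Z ≤ probOne pstar X := probOne_anti pstar hp0 hXZ'
    have h2 : probOne pstar Y ≤ probOne pstar Z := probOne_anti pstar hp0 hZY'
    rw [hcons X hXC] at h1
    rw [hcons Y hYC] at h2
    rw [hfrZX]
    linarith [hfrXY]
  have hconsP : ∀ W ∈ insert Z C, probOne pstar W = freq W D := by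
    intro W hW
    rcases Finset.mem_insert.mp hW with rfl | hW
    · exact part1
    · exact hcons W hW
  have hE1 : entropy pstar ≤ entropy pstar' := hmax' pstar hpstar hconsP
  have hE2 : entropy pstar' ≤ entropy pstar :=
    hmax pstar' hpstar' (fun W hW => hcons' W (Finset.mem_insert_of_mem hW))
  have hEeq : entropy pstar' = entropy pstar := le_antisymm hE2 hE1
  have hlog2 : (0:ℝ) < Real.log 2 := Real.log_pos (by norm_num)
  have hent : ∀ p : Transaction N → ℝ,
      entropy p = -(∑ t, p t * Real.log (p t)) / Real.log 2 := by
    intro p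
    unfold entropy
    rw [neg_div, neg_inj]
    rw [Finset.sum_div]
    apply Finset.sum_congr rfl
    intro t _
    rw [Real.logb]
    ring
  have part2 : pstar' = pstar := by
    by_contra hne
    obtain ⟨t0, ht0⟩ := Function.ne_iff.mp hne
    set m : Transaction N → ℝ := fun t => (pstar t + pstar' t) / 2 with hm
    have hmD : IsDistr m := by
      constructor
      · intro t
        constructor
        · simp only [hm]; linarith [(hpstar.1 t).1, (hpstar'.1 t).1]
        · simp only [hm]; linarith [(hpstar.1 t).2, (hpstar'.1 t).2]
      · simp only [hm]
        rw [← Finset.sum_div, Finset.sum_add_distrib, hpstar.2, hpstar'.2]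
        norm_num
    have hmcons : ∀ W ∈ insert Z C, probOne m W = freq W D := by
      intro W hW
      rw [hm, probOne_avg, hconsP W hW, hcons' W hW]
      ring
    have hsum : ∑ t, m t * Real.log (m t)
        < (∑ t, pstar t * Real.log (pstar t) + ∑ t, pstar' t * Real.log (pstar' t)) / 2 := by
      rw [← Finset.sum_add_distrib, Finset.sum_div]
      apply Finset.sum_lt_sum
      · intro t _
        rcases eq_or_ne (pstar t) (pstar' t) with heq | hne'
        · have hmt : m t = pstar t := by simp only [hm, ← heq]; ring
          rw [hmt, ← heq]
          linarith
        · exact (mul_log_midpoint_lt (hp0 t) (hp0' t) hne').le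
      · exact ⟨t0, Finset.mem_univ t0, mul_log_midpoint_lt (hp0 t0) (hp0' t0) (Ne.symm ht0)⟩
    -- equal entropies force equal sums
    have hSeq : ∑ t, pstar' t * Real.log (pstar' t) = ∑ t, pstar t * Real.log (pstar t) := by
      have h := hEeq
      rw [hent pstar', hent pstar, div_eq_div_iff (ne_of_gt hlog2) (ne_of_gt hlog2)] at h
      have := mul_right_cancel₀ (ne_of_gt hlog2) h
      linarith
    have hSm : ∑ t, m t * Real.log (m t) < ∑ t, pstar' t * Real.log (pstar' t) := by
      rw [hSeq]
      linarith [hsum, hSeq]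
    have hEm : entropy pstar' < entropy m := by
      rw [hent pstar', hent m, div_lt_div_iff₀ hlog2 hlog2]
      nlinarith [hSm, hlog2]
    exact absurd (hmax' m hmD hmcons) (not_le.mpr hEm)
  refine ⟨part1, part2, ?_⟩
  intro hD2
  rw [part2]
  unfold bic
  have hcard : ((insert Z C).card : ℝ) = (C.card : ℝ) + 1 := by
    rw [Finset.card_insert_of_notMem hZC]
    push_cast
    ring
  have hlb : 0 < Real.logb 2 (Multiset.card D : ℝ) := by
    apply Real.logb_pos (by norm_num)
    have h2 : (2:ℝ) ≤ (Multiset.card D : ℝ) := by exact_mod_cast hD2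
    linarith
  rw [hcard]
  nlinarith [hlb]
end

section
/- (Identity underlying Theorem 5.1.) Let p be a distribution on T having exponential form over a collection of itemsets C, and let q be any distribution on T with q(X = 1) = p(X = 1) for every X ∈ C. Then KL(q‖p) = H(p) − H(q). -/
open scoped BigOperators

/-- `p` has exponential form over the collection `C` of itemsets. -/
def ExpForm {N : ℕ} (C : Finset (Finset (Fin N))) (p : Transaction N → ℝ) : Prop :=
  ∃ u0 : ℝ, ∃ u : Finset (Fin N) → ℝ, 0 < u0 ∧ (∀ X ∈ C, 0 < u X) ∧
    ∀ t, p t = u0 * ∏ X ∈ C, if supports X t then u X else 1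

/-- Kullback–Leibler divergence (base 2). -/
noncomputable def KLdiv {N : ℕ} (p q : Transaction N → ℝ) : ℝ :=
  ∑ t, p t * Real.logb 2 (p t / q t)

/-- Identity underlying Theorem 5.1: if `p` has exponential form over `C` and
`q` matches `p` on the frequencies of `C`, then `KL(q‖p) = H(p) − H(q)`. -/
theorem kl_eq_entropy_diff {N : ℕ} (hN : 1 ≤ N)
    (C : Finset (Finset (Fin N)))
    (p : Transaction N → ℝ) (hp : IsDistr p) (hform : ExpForm C p)
    (q : Transaction N → ℝ) (hq : IsDistr q)
    (hagree : ∀ X ∈ C, probOne q X = probOne p X) :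
    KLdiv q p = entropy p - entropy q := by
  obtain ⟨u0, u, hu0, hu, hform⟩ := hform
  -- p is strictly positive
  have hppos : ∀ t, 0 < p t := by
    intro t
    rw [hform t]
    apply mul_pos hu0
    apply Finset.prod_pos
    intro X hX
    split
    · exact hu X hX
    · exact one_pos
  -- log₂ p t decomposes
  have hlog : ∀ t : Transaction N, Real.logb 2 (p t) =
      Real.logb 2 u0 + ∑ X ∈ C, (if supports X t then Real.logb 2 (u X) else 0) := by
    intro t
    rw [hform t, Real.logb_mul (ne_of_gt hu0)]
    · congr 1
      rw [Real.logb_prod]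
      · apply Finset.sum_congr rfl
        intro X hX
        split
        · rfl
        · simp
      · intro X hX
        split
        · exact ne_of_gt (hu X hX)
        · exact one_ne_zero
    · apply ne_of_gt
      apply Finset.prod_pos
      intro X hX
      split
      · exact hu X hX
      · exact one_pos
  -- key: ∑ q t * logb 2 (p t) = ∑ p t * logb 2 (p t)
  have key : ∀ r : Transaction N → ℝ, (∑ t, r t = 1) →
      (∀ X ∈ C, probOne r X = probOne p X) →
      ∑ t, r t * Real.logb 2 (p t)
        = Real.logb 2 u0 + ∑ X ∈ C, Real.logb 2 (u X) * probOne p X := by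
    intro r hr1 hragree
    have : ∑ t, r t * Real.logb 2 (p t)
        = ∑ t, (r t * Real.logb 2 u0
            + ∑ X ∈ C, (if supports X t then Real.logb 2 (u X) * r t else 0)) := by
      apply Finset.sum_congr rfl
      intro t _
      rw [hlog t, mul_add, Finset.mul_sum]
      congr 1
      apply Finset.sum_congr rfl
      intro X _
      split <;> ring
    rw [this, Finset.sum_add_distrib, ← Finset.sum_mul, hr1, one_mul,
      Finset.sum_comm]
    congr 1
    apply Finset.sum_congr rfl
    intro X hX
    rw [← hragree X hX]
    unfold probOne
    rw [Finset.mul_sum]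
    apply Finset.sum_congr rfl
    intro t _
    split <;> simp
  have kq := key q hq.2 hagree
  have kp := key p hp.2 (fun X _ => rfl)
  -- pointwise split of KL term
  have hsplit : ∀ t, q t * Real.logb 2 (q t / p t)
      = q t * Real.logb 2 (q t) - q t * Real.logb 2 (p t) := by
    intro t
    rcases eq_or_ne (q t) 0 with h | h
    · simp [h]
    · rw [Real.logb_div h (ne_of_gt (hppos t))]
      ring
  unfold KLdiv entropy
  rw [Finset.sum_congr rfl (fun t _ => hsplit t), Finset.sum_sub_distrib, kq, ← kp]
  ring
end

section
/- (Theorem 5.2.) Fix a collection of itemsets C, a dataset D, and let p*_C be a maximum-entropy distribution consistent with D for C that has exponential form over C with strictly positive parameters. Let X be an itemset and let p*_{C∪{X}} be a maximum-entropy distribution consistent with D for C ∪ {X}. Then 0 ≤ kl(fr(X|D), p*_C(X = 1)) ≤ KL(p*_{C∪{X}} ‖ p*_C). Moreover, kl(fr(X|D), p*_C(X = 1)) = 0 if and only if KL(p*_{C∪{X}} ‖ p*_C) = 0, which holds if and only if fr(X|D) = p*_C(X = 1). -/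
open scoped BigOperators

/-- Binary KL divergence `kl(x,y)` between Bernoulli parameters. -/
noncomputable def klPair (x y : ℝ) : ℝ :=
  x * Real.logb 2 (x / y) + (1 - x) * Real.logb 2 ((1 - x) / (1 - y))

/-!
Both sides compare `p*_{C∪{X}}` with `p*_C` through the event `X = 1`. Coarse-graining the
outcome space to that event and its complement can only decrease the divergence (the log-sum
inequality), which gives `kl ≤ KL`. Because `p*_C` is of exponential form, `log₂ p*_C` is affine in
the indicators of the itemsets of `C`, so every distribution that agrees with `p*_C` on `C` has
the same cross-entropy against it; hence `KL(p*_{C∪{X}} ‖ p*_C) = H(p*_C) - H(p*_{C∪{X}})`.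
If `fr(X|D) = p*_C(X = 1)`, then `p*_C` is itself admissible for `C ∪ {X}`, so this entropy gap is
`≤ 0` and the divergence vanishes; conversely `kl = 0` forces the two probabilities to agree.
-/

open Finset Real InformationTheory

lemma log_sum_inequality {ι : Type*} (s : Finset ι) (q p : ι → ℝ)
    (hq : ∀ i ∈ s, 0 ≤ q i) (hp : ∀ i ∈ s, 0 < p i) :
    (∑ i ∈ s, q i) * log ((∑ i ∈ s, q i) / ∑ i ∈ s, p i) ≤ ∑ i ∈ s, q i * log (q i / p i) := by
  rcases s.eq_empty_or_nonempty with rfl | hs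
  · simp
  set P := ∑ i ∈ s, p i
  have hP : 0 < P := sum_pos hp hs
  have jensen := convexOn_mul_log.map_sum_le (t := s) (w := fun i => p i / P)
    (p := fun i => q i / p i) (fun i hi => (div_pos (hp i hi) hP).le)
    (by rw [← sum_div, div_self hP.ne'])
    (fun i hi => Set.mem_Ici.mpr (div_nonneg (hq i hi) (hp i hi).le))
  simp only [smul_eq_mul] at jensen
  have hmean : ∑ i ∈ s, p i / P * (q i / p i) = (∑ i ∈ s, q i) / P := by
    rw [sum_div]
    refine sum_congr rfl fun i hi => ?_
    field_simp [(hp i hi).ne']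
  have hsum : ∑ i ∈ s, p i / P * (q i / p i * log (q i / p i))
      = (∑ i ∈ s, q i * log (q i / p i)) / P := by
    rw [sum_div]
    refine sum_congr rfl fun i hi => ?_
    field_simp [(hp i hi).ne']
  rw [hmean, hsum, div_mul_eq_mul_div] at jensen
  exact (div_le_div_iff_of_pos_right hP).mp jensen

lemma logb_sum_inequality {ι : Type*} {b : ℝ} (hb : 1 < b) (s : Finset ι) (q p : ι → ℝ)
    (hq : ∀ i ∈ s, 0 ≤ q i) (hp : ∀ i ∈ s, 0 < p i) :
    (∑ i ∈ s, q i) * logb b ((∑ i ∈ s, q i) / ∑ i ∈ s, p i) ≤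
      ∑ i ∈ s, q i * logb b (q i / p i) := by
  simp only [logb, ← mul_div_assoc, ← sum_div]
  exact div_le_div_of_nonneg_right (log_sum_inequality s q p hq hp) (log_pos hb).le

lemma klPair_eq_klFun_div_log {x y : ℝ} (hy0 : 0 < y) (hy1 : y < 1) :
    klPair x y = (y * klFun (x / y) + (1 - y) * klFun ((1 - x) / (1 - y))) / log 2 := by
  have : 1 - y ≠ 0 := by linarith
  simp only [klPair, logb, klFun_apply]
  field_simp
  ring

lemma klPair_nonneg {x y : ℝ} (hx0 : 0 ≤ x) (hx1 : x ≤ 1) (hy0 : 0 < y) (hy1 : y < 1) :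
    0 ≤ klPair x y := by
  rw [klPair_eq_klFun_div_log hy0 hy1]
  have h1 : 0 ≤ klFun (x / y) := klFun_nonneg (div_nonneg hx0 hy0.le)
  have h2 : 0 ≤ klFun ((1 - x) / (1 - y)) := klFun_nonneg (div_nonneg (by linarith) (by linarith))
  have : 0 < 1 - y := by linarith
  positivity

lemma klPair_eq_zero_iff {x y : ℝ} (hx0 : 0 ≤ x) (hx1 : x ≤ 1) (hy0 : 0 < y) (hy1 : y < 1) :
    klPair x y = 0 ↔ x = y := by
  refine ⟨fun h => ?_, fun h => ?_⟩
  · rw [klPair_eq_klFun_div_log hy0 hy1, div_eq_zero_iff, or_iff_left (log_pos one_lt_two).ne']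
      at h
    have h1 : 0 ≤ klFun (x / y) := klFun_nonneg (div_nonneg hx0 hy0.le)
    have h2 : 0 ≤ klFun ((1 - x) / (1 - y)) :=
      klFun_nonneg (div_nonneg (by linarith) (by linarith))
    have hklFun : klFun (x / y) = 0 := by nlinarith
    rwa [klFun_eq_zero_iff (div_nonneg hx0 hy0.le), div_eq_one_iff_eq hy0.ne'] at hklFun
  · have : 1 - y ≠ 0 := by linarith
    simp [klPair, h, div_self hy0.ne', div_self this]

section Transactions

variable {N : ℕ} {p q : Transaction N → ℝ} {X : Finset (Fin N)}

lemma probOne_eq_sum_filter : probOne p X = ∑ t with supports X t, p t :=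
  (sum_filter _ _).symm

lemma sum_filter_not_supports (hp : ∑ t, p t = 1) :
    ∑ t with ¬ supports X t, p t = 1 - probOne p X := by
  rw [probOne_eq_sum_filter, ← hp, ← sum_filter_add_sum_filter_not univ (supports X)]
  ring

lemma probOne_nonneg (hp : IsDistr p) : 0 ≤ probOne p X :=
  probOne_eq_sum_filter ▸ sum_nonneg fun t _ => (hp.1 t).1

lemma probOne_le_one (hp : IsDistr p) : probOne p X ≤ 1 := by
  have hcompl := sum_filter_not_supports (X := X) hp.2
  have : 0 ≤ ∑ t with ¬ supports X t, p t := sum_nonneg fun t _ => (hp.1 t).1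
  linarith

lemma probOne_pos (hpos : ∀ t, 0 < p t) : 0 < probOne p X :=
  probOne_eq_sum_filter ▸ sum_pos (fun t _ => hpos t)
    ⟨fun _ => true, mem_filter.2 ⟨mem_univ _, fun _ _ => rfl⟩⟩

/-- At `p(X = 1) = 1` the formula for `kl` divides by zero; this only happens when every
transaction supports `X`, and then `q(X = 1) = 1` as well. -/
lemma probOne_lt_one_or_eq_one (hq : ∑ t, q t = 1) (hp : IsDistr p) (hpos : ∀ t, 0 < p t) :
    probOne p X < 1 ∨ (probOne q X = 1 ∧ probOne p X = 1) := by
  refine (probOne_le_one hp).lt_or_eq.imp_right fun hp1 => ⟨?_, hp1⟩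
  have hall : ∀ t, supports X t := by
    by_contra! ⟨t, ht⟩
    have hcompl := sum_filter_not_supports (X := X) hp.2
    rw [hp1, sub_self] at hcompl
    have : p t ≤ ∑ s with ¬ supports X s, p s :=
      single_le_sum (fun s _ => (hpos s).le) (mem_filter.2 ⟨mem_univ t, ht⟩)
    linarith [hpos t]
  simpa [probOne, hall] using hq

lemma klPair_probOne_nonneg (hq : IsDistr q) (hp : IsDistr p) (hpos : ∀ t, 0 < p t) :
    0 ≤ klPair (probOne q X) (probOne p X) := by
  rcases probOne_lt_one_or_eq_one hq.2 hp hpos with hp1 | ⟨hq1, hp1⟩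
  · exact klPair_nonneg (probOne_nonneg hq) (probOne_le_one hq) (probOne_pos hpos) hp1
  · simp [klPair, hq1, hp1]

lemma eq_of_klPair_probOne_eq_zero (hq : IsDistr q) (hp : IsDistr p) (hpos : ∀ t, 0 < p t)
    (h : klPair (probOne q X) (probOne p X) = 0) : probOne q X = probOne p X := by
  rcases probOne_lt_one_or_eq_one hq.2 hp hpos with hp1 | ⟨hq1, hp1⟩
  · exact (klPair_eq_zero_iff (probOne_nonneg hq) (probOne_le_one hq) (probOne_pos hpos) hp1).1 h
  · rw [hq1, hp1]

lemma klPair_probOne_le_KLdiv (hq : IsDistr q) (hp : IsDistr p) (hpos : ∀ t, 0 < p t) :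
    klPair (probOne q X) (probOne p X) ≤ KLdiv q p := by
  have hlogsum (s : Finset (Transaction N)) :=
    logb_sum_inequality one_lt_two s q p (fun t _ => (hq.1 t).1) (fun t _ => hpos t)
  have hon := hlogsum {t | supports X t}
  have hoff := hlogsum {t | ¬ supports X t}
  rw [← probOne_eq_sum_filter, ← probOne_eq_sum_filter] at hon
  rw [sum_filter_not_supports hq.2, sum_filter_not_supports hp.2] at hoff
  rw [klPair, KLdiv, ← sum_filter_add_sum_filter_not univ (supports X)]
  exact add_le_add hon hoff

end Transactions

noncomputable def crossEntropy {N : ℕ} (q p : Transaction N → ℝ) : ℝ :=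
  - ∑ t, q t * logb 2 (p t)

lemma entropy_eq_crossEntropy_self {N : ℕ} (p : Transaction N → ℝ) :
    entropy p = crossEntropy p p :=
  rfl

lemma KLdiv_eq_crossEntropy_sub_entropy {N : ℕ} {p q : Transaction N → ℝ}
    (hp : ∀ t, p t ≠ 0) : KLdiv q p = crossEntropy q p - entropy q := by
  have hterm (t : Transaction N) :
      q t * logb 2 (q t / p t) = q t * logb 2 (q t) - q t * logb 2 (p t) := by
    rcases eq_or_ne (q t) 0 with hq | hq
    · simp [hq]
    · rw [logb_div hq (hp t), mul_sub]
  simp only [KLdiv, crossEntropy, entropy, hterm, sum_sub_distrib]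
  ring

namespace ExpForm

variable {N : ℕ} {C : Finset (Finset (Fin N))} {p : Transaction N → ℝ}

lemma pos (hp : ExpForm C p) (t : Transaction N) : 0 < p t := by
  obtain ⟨u0, u, hu0, hu, hpu⟩ := hp
  rw [hpu t]
  exact mul_pos hu0 (prod_pos fun Y hY => by split_ifs <;> simp [hu Y hY])

lemma crossEntropy_eq (hp : ExpForm C p) {q q' : Transaction N → ℝ}
    (hmass : ∑ t, q t = ∑ t, q' t) (hC : ∀ Y ∈ C, probOne q Y = probOne q' Y) :
    crossEntropy q p = crossEntropy q' p := by
  obtain ⟨u0, u, hu0, hu, hpu⟩ := hp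
  have hlogb (t : Transaction N) : logb 2 (p t) =
      logb 2 u0 + ∑ Y ∈ C, if supports Y t then logb 2 (u Y) else 0 := by
    have hfactor (Y) (hY : Y ∈ C) : (if supports Y t then u Y else 1) ≠ 0 := by
      split_ifs <;> simp [(hu Y hY).ne']
    rw [hpu t, logb_mul hu0.ne' (prod_ne_zero_iff.2 hfactor), logb_prod _ _ hfactor]
    congr 1
    exact sum_congr rfl fun Y _ => by split_ifs <;> simp
  have hcross (r : Transaction N → ℝ) : crossEntropy r p =
      -((∑ t, r t) * logb 2 u0 + ∑ Y ∈ C, probOne r Y * logb 2 (u Y)) := by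
    simp only [crossEntropy, hlogb, mul_add, mul_sum, sum_add_distrib, sum_mul, probOne, mul_ite,
      ite_mul, mul_zero, zero_mul]
    rw [sum_comm]
  rw [hcross, hcross, hmass]
  congr 2
  exact sum_congr rfl fun Y hY => by rw [hC Y hY]

end ExpForm

theorem heuristic_bounds_KL_general {N : ℕ}
    (C : Finset (Finset (Fin N)))
    (D : Multiset (Transaction N))
    -- `p*_C` is a maximum-entropy distribution consistent with `D` for `C`,
    -- of exponential form over `C` (with strictly positive parameters):
    (pstar : Transaction N → ℝ) (hpstar : IsDistr pstar)
    (hcons : ∀ Y ∈ C, probOne pstar Y = freq Y D)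
    (hform : ExpForm C pstar)
    -- `p*_{C ∪ {X}}` is a maximum-entropy distribution consistent with `D` for `C ∪ {X}`:
    (X : Finset (Fin N))
    (pstar' : Transaction N → ℝ) (hpstar' : IsDistr pstar')
    (hcons' : ∀ Y ∈ insert X C, probOne pstar' Y = freq Y D)
    (hmax' : ∀ q : Transaction N → ℝ, IsDistr q →
      (∀ Y ∈ insert X C, probOne q Y = freq Y D) → entropy q ≤ entropy pstar') :
    0 ≤ klPair (freq X D) (probOne pstar X) ∧
      klPair (freq X D) (probOne pstar X) ≤ KLdiv pstar' pstar ∧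
      (klPair (freq X D) (probOne pstar X) = 0 ↔ KLdiv pstar' pstar = 0) ∧
      (KLdiv pstar' pstar = 0 ↔ freq X D = probOne pstar X) := by
  have hpos := hform.pos
  have hfreq : freq X D = probOne pstar' X := (hcons' X (mem_insert_self X C)).symm
  have hKL : KLdiv pstar' pstar = entropy pstar - entropy pstar' := by
    rw [KLdiv_eq_crossEntropy_sub_entropy fun t => (hpos t).ne',
      hform.crossEntropy_eq (hpstar'.2.trans hpstar.2.symm)
        fun Y hY => (hcons' Y (mem_insert_of_mem hY)).trans (hcons Y hY).symm,
      entropy_eq_crossEntropy_self pstar]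
  rw [hfreq]
  have hle := klPair_probOne_le_KLdiv (X := X) hpstar' hpstar hpos
  have hnonneg := klPair_probOne_nonneg (X := X) hpstar' hpstar hpos
  have heq := eq_of_klPair_probOne_eq_zero (X := X) hpstar' hpstar hpos
  have hzero : probOne pstar' X = probOne pstar X → KLdiv pstar' pstar = 0 := by
    intro h
    have hent := hmax' pstar hpstar fun Y hY => by
      rcases mem_insert.1 hY with rfl | hY
      · rw [← h, hfreq]
      · exact hcons Y hY
    linarith
  exact ⟨hnonneg, hle, ⟨fun h => hzero (heq h), fun h => le_antisymm (h ▸ hle) hnonneg⟩,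
    fun h => heq (le_antisymm (h ▸ hle) hnonneg), hzero⟩

/-- Theorem 5.2: the heuristic `kl` is a nonnegative lower bound on the KL
divergence between successive maximum entropy models, and vanishes exactly when
the frequency of `X` agrees with the current model estimate. -/
theorem heuristic_bounds_KL {N : ℕ} (hN : 1 ≤ N)
    (C : Finset (Finset (Fin N)))
    (D : Multiset (Transaction N)) (hD : D ≠ 0)
    -- `p*_C` is a maximum-entropy distribution consistent with `D` for `C`,
    -- of exponential form over `C` (with strictly positive parameters):
    (pstar : Transaction N → ℝ) (hpstar : IsDistr pstar)
    (hcons : ∀ Y ∈ C, probOne pstar Y = freq Y D)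
    (hmax : ∀ q : Transaction N → ℝ, IsDistr q → (∀ Y ∈ C, probOne q Y = freq Y D) →
      entropy q ≤ entropy pstar)
    (hform : ExpForm C pstar)
    -- `p*_{C ∪ {X}}` is a maximum-entropy distribution consistent with `D` for `C ∪ {X}`:
    (X : Finset (Fin N))
    (pstar' : Transaction N → ℝ) (hpstar' : IsDistr pstar')
    (hcons' : ∀ Y ∈ insert X C, probOne pstar' Y = freq Y D)
    (hmax' : ∀ q : Transaction N → ℝ, IsDistr q →
      (∀ Y ∈ insert X C, probOne q Y = freq Y D) → entropy q ≤ entropy pstar') :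
    0 ≤ klPair (freq X D) (probOne pstar X) ∧
      klPair (freq X D) (probOne pstar X) ≤ KLdiv pstar' pstar ∧
      (klPair (freq X D) (probOne pstar X) = 0 ↔ KLdiv pstar' pstar = 0) ∧
      (KLdiv pstar' pstar = 0 ↔ freq X D = probOne pstar X) :=
  heuristic_bounds_KL_general C D pstar hpstar hcons hform X pstar' hpstar' hcons' hmax'
end

section
/- (Lemma A.1 / Lemma 'closure1'.) Let C = (X_1,…,X_k) be a sequence of itemsets and let G ⊆ C. Then G = cl(G) if and only if there exists a block T' of the partition T_C with G = Sets(T';C). -/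
open scoped BigOperators

/-- `Sets(t; C)`: the members of `C` supported by the transaction `t`. -/
def setsOf {N : ℕ} (C : Finset (Finset (Fin N))) (t : Transaction N) :
    Finset (Finset (Fin N)) :=
  C.filter (fun X => supports X t)

/-- A block of the partition `T_C` of `{0,1}^N` induced by `C`: a (nonempty)
fiber of the map `t ↦ Sets(t; C)`. -/
def IsBlock {N : ℕ} (C : Finset (Finset (Fin N))) (B : Set (Transaction N)) : Prop :=
  B.Nonempty ∧ ∃ t0, B = {t | setsOf C t = setsOf C t0}

/-- Closure of a subcollection `G ⊆ C`:
`cl(G) = {X ∈ C : X ⊆ ⋃_{Y ∈ G} Y}`. -/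
def clOf {N : ℕ} (C G : Finset (Finset (Fin N))) : Finset (Finset (Fin N)) :=
  C.filter (fun X => X ⊆ G.biUnion id)

/-- Lemma A.1 (`closure1`): `G = cl(G)` iff `G` is the set of members of `C`
supported by the transactions of some block of the partition `T_C`. -/
theorem closed_iff_block {N : ℕ} (hN : 1 ≤ N)
    (C G : Finset (Finset (Fin N))) (hG : G ⊆ C) :
    G = clOf C G ↔
      ∃ B : Set (Transaction N), IsBlock C B ∧ ∀ t ∈ B, setsOf C t = G := by
  -- the canonical transaction: indicator of ⋃ G
  set t0 : Transaction N := fun i => decide (i ∈ G.biUnion id) with ht0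
  have hsets : setsOf C t0 = clOf C G := by
    ext X
    simp only [setsOf, clOf, Finset.mem_filter, supports, ht0, decide_eq_true_eq]
    constructor
    · rintro ⟨hXC, h⟩; exact ⟨hXC, fun i hi => h i hi⟩
    · rintro ⟨hXC, h⟩; exact ⟨hXC, fun i hi => h hi⟩
  constructor
  · intro hcl
    refine ⟨{t | setsOf C t = setsOf C t0}, ⟨⟨t0, rfl⟩, t0, rfl⟩, ?_⟩
    intro t ht
    rw [ht, hsets, ← hcl]
  · rintro ⟨B, ⟨⟨t, htB⟩, _⟩, hB⟩
    have hGt : setsOf C t = G := hB t htB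
    apply Finset.Subset.antisymm
    · intro X hX
      exact Finset.mem_filter.mpr ⟨hG hX, Finset.subset_biUnion_of_mem id hX⟩
    · intro X hX
      rw [← hGt]
      obtain ⟨hXC, hsub⟩ := Finset.mem_filter.mp hX
      refine Finset.mem_filter.mpr ⟨hXC, fun i hi => ?_⟩
      obtain ⟨Y, hY, hiY⟩ := Finset.mem_biUnion.mp (hsub hi)
      have : Y ∈ setsOf C t := hGt ▸ hY
      exact (Finset.mem_filter.mp this).2 i hiY
end

section
/- (Factorization of exponential-form models over disjoint itemset groups.) Let C = C₁ ∪ C₂ be a collection of itemsets with C₁ ∩ C₂ = ∅ such that every X ∈ C₁ and every Y ∈ C₂ satisfy X ∩ Y = ∅, and set B = ∪_{X∈C₁} X. If p is a distribution on T having exponential form over C, then under p the coordinates in B are independent of the coordinates outside B: for every pair of vectors (b, c) with b ∈ {0,1}^B and c ∈ {0,1}^{Bᶜ}, the probability that a transaction restricts to b on B and to c on Bᶜ equals the product of the marginal probability of b on B and the marginal probability of c on Bᶜ. -/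
open scoped BigOperators

/-- Marginal probability: the probability under `p` that a transaction agrees
with `t` on every coordinate in `B`. -/
def marg {N : ℕ} (p : Transaction N → ℝ) (B : Finset (Fin N)) (t : Transaction N) : ℝ :=
  ∑ s, if ∀ i ∈ B, s i = t i then p s else 0

/-- Factorization of exponential-form models over disjoint itemset groups:
if `C = C₁ ∪ C₂` with `C₁ ∩ C₂ = ∅` and the itemsets of `C₁` are disjoint from
those of `C₂`, and `B = ⋃ C₁`, then under any exponential-form distribution `p`
over `C` the coordinates in `B` are independent of those outside `B`: the
probability of every transaction (i.e., of every pair of restrictions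
`(b, c) ∈ {0,1}^B × {0,1}^{Bᶜ}`) factorizes into the marginal of its
restriction to `B` times the marginal of its restriction to `Bᶜ`. -/
theorem expForm_factorizes {N : ℕ} (hN : 1 ≤ N)
    (C₁ C₂ : Finset (Finset (Fin N))) (hdisj : Disjoint C₁ C₂)
    (hcross : ∀ X ∈ C₁, ∀ Y ∈ C₂, Disjoint X Y)
    (p : Transaction N → ℝ) (hp : IsDistr p) (hform : ExpForm (C₁ ∪ C₂) p) :
    ∀ t : Transaction N,
      p t = marg p (C₁.biUnion id) t * marg p (C₁.biUnion id)ᶜ t := by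
  classical
  obtain ⟨u0, u, hu0, hupos, hpform⟩ := hform
  intro t
  set B := C₁.biUnion id with hBdef
  set F : Transaction N → ℝ := fun s => ∏ X ∈ C₁, if supports X s then u X else 1 with hF
  set G : Transaction N → ℝ := fun s => ∏ X ∈ C₂, if supports X s then u X else 1 with hG
  have hsplit : ∀ s, p s = u0 * (F s * G s) := by
    intro s
    rw [hpform s, Finset.prod_union hdisj]
  have hFdep : ∀ s s' : Transaction N, (∀ i ∈ B, s i = s' i) → F s = F s' := by
    intro s s' h
    apply Finset.prod_congr rfl
    intro X hX
    have hiff : supports X s ↔ supports X s' := by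
      constructor <;> intro hs i hi
      · rw [← h i (Finset.mem_biUnion.mpr ⟨X, hX, hi⟩)]; exact hs i hi
      · rw [h i (Finset.mem_biUnion.mpr ⟨X, hX, hi⟩)]; exact hs i hi
    simp [hiff]
  have hGdep : ∀ s s' : Transaction N, (∀ i, i ∉ B → s i = s' i) → G s = G s' := by
    intro s s' h
    apply Finset.prod_congr rfl
    intro X hX
    have hnotB : ∀ i ∈ X, i ∉ B := by
      intro i hi hiB
      obtain ⟨Y, hY, hiY⟩ := Finset.mem_biUnion.mp hiB
      exact Finset.disjoint_left.mp (hcross Y hY X hX) hiY hi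
    have hiff : supports X s ↔ supports X s' := by
      constructor <;> intro hs i hi
      · rw [← h i (hnotB i hi)]; exact hs i hi
      · rw [h i (hnotB i hi)]; exact hs i hi
    simp [hiff]
  set merge : Transaction N → Transaction N → Transaction N :=
    fun a b i => if i ∈ B then a i else b i with hmerge
  have hFm : ∀ s s' : Transaction N, F (merge s' s) = F s' := by
    intro s s'
    apply hFdep
    intro i hi
    simp [hmerge, hi]
  have hGm : ∀ s s' : Transaction N, G (merge s' s) = G s := by
    intro s s'
    apply hGdep
    intro i hi
    simp [hmerge, hi]
  have key : marg p B t * marg p Bᶜ t =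
      p t * ∑ s : Transaction N, ∑ s' : Transaction N,
        (if (∀ i ∈ B, s i = t i) ∧ (∀ i, i ∉ B → s' i = t i) then p (merge s' s) else 0) := by
    rw [marg, marg, Finset.sum_mul_sum, Finset.mul_sum]
    simp only [Finset.mem_compl]
    apply Finset.sum_congr rfl
    intro s _
    rw [Finset.mul_sum]
    apply Finset.sum_congr rfl
    intro s' _
    by_cases h1 : ∀ i ∈ B, s i = t i
    · by_cases h2 : ∀ i, i ∉ B → s' i = t i
      · rw [if_pos h2, if_pos h1, if_pos (And.intro h1 h2)]
        rw [hsplit s, hsplit s', hsplit t, hsplit (merge s' s), hFm, hGm,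
          hFdep s t h1, hGdep s' t h2]
        ring
      · rw [if_neg h2,
          if_neg (show ¬((∀ i ∈ B, s i = t i) ∧ ∀ i ∉ B, s' i = t i) from fun h => h2 h.2)]
        ring
    · rw [if_neg (show ¬((∀ i ∈ B, s i = t i) ∧ ∀ i ∉ B, s' i = t i) from fun h => h1 h.1),
        if_neg h1]
      by_cases h2 : ∀ i, i ∉ B → s' i = t i
      · rw [if_pos h2]; ring
      · rw [if_neg h2]; ring
  rw [key]
  have hbij : (∑ s : Transaction N, ∑ s' : Transaction N,
      (if (∀ i ∈ B, s i = t i) ∧ (∀ i, i ∉ B → s' i = t i) then p (merge s' s) else 0)) =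
      ∑ r : Transaction N, p r := by
    rw [← Finset.sum_product']
    rw [← Finset.sum_filter]
    apply Finset.sum_nbij' (i := fun x : Transaction N × Transaction N => merge x.2 x.1)
      (j := fun r : Transaction N => (merge t r, merge r t))
    · intro a _
      exact Finset.mem_univ _
    · intro r _
      simp only [Finset.mem_filter, Finset.mem_product, Finset.mem_univ, true_and]
      constructor
      · intro i hi; simp [hmerge, hi]
      · intro i hi; simp [hmerge, hi]
    · intro a ha
      simp only [Finset.mem_filter, Finset.mem_product, Finset.mem_univ, true_and] at ha
      obtain ⟨h1, h2⟩ := ha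
      ext i
      · by_cases hi : i ∈ B
        · simp [hmerge, hi, (h1 i hi).symm]
        · simp [hmerge, hi]
      · by_cases hi : i ∈ B
        · simp [hmerge, hi]
        · simp [hmerge, hi, (h2 i hi).symm]
    · intro r _
      funext i
      by_cases hi : i ∈ B <;> simp [hmerge, hi]
    · intro a _
      rfl
  rw [hbij, hp.2, mul_one]
end
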